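/- arXiv:2205.03328 — 8 statements merged into one kernel-verified Lean document; each statement's English description precedes it below -/
import Mathlib

section
/- Let Δ be a line age function on n0 nodes (with parameters λs, λ, n). Then for every integer i with 1 ≤ i ≤ n0/2 and i + 1 ≤ n0, the single-node ages satisfy Δ_{i+1,1} ≤ Δ_{i,1}; that is, in a line network the expected version age is highest at the corner nodes and decreases towards the center. -/
/-!
Each recursion expresses `Δ_{j,k}` through ages of sets of size `k + 1`, so
`Δ_{j+1,k} ≤ Δ_{j,k}` follows by downward induction on `k`. Away from the corner both sides
share a denominator and the induction hypothesis compares the numerators; when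
`2j + k = n0 + 1` the two sets are mirror images and the ages agree. At the corner,
`Δ_{2,k} ≤ Δ_{1,k}` reduces to `Δ_{2,k+1} ≤ Δ_{1,k}`, which needs the corner ages
to decrease in `k`. That is equivalent to `(kλ/n) Δ_{1,k+1} ≤ λs`, which follows from the bound
`(kλ/n) Δ_{1,k} ≤ λs`: it holds with equality for `k = n0` and propagates downwards.
-/

theorem mul_le_of_le_of_mul_le {α : Type*} [Ring α] [LinearOrder α] [IsOrderedRing α]
    {a a' x s : α} (ha : 0 ≤ a) (haa' : a ≤ a') (hs : 0 ≤ s) (h : a' * x ≤ s) :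
    a * x ≤ s := by
  rcases le_total 0 x with hx | hx
  · exact (mul_le_mul_of_nonneg_right haa' hx).trans h
  · exact (mul_nonpos_of_nonneg_of_nonpos ha hx).trans hs

structure IsLineAgeRecursion (n0 : ℕ) (lamS lam n : ℝ) (Δ : ℕ → ℕ → ℝ) : Prop where
  full : Δ 1 n0 = lamS * n / ((n0 : ℝ) * lam)
  mid : ∀ j k : ℕ, 1 < j → 1 ≤ k → j + k ≤ n0 →
    Δ j k = (lamS + (lam / 2) * Δ j (k + 1) + (lam / 2) * Δ (j - 1) (k + 1))
      / ((k : ℝ) * lam / n + lam)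
  left : ∀ k : ℕ, 1 ≤ k → k < n0 →
    Δ 1 k = (lamS + (lam / 2) * Δ 1 (k + 1)) / ((k : ℝ) * lam / n + lam / 2)
  right : ∀ j k : ℕ, 1 < j → 1 ≤ k → j + k = n0 + 1 →
    Δ j k = (lamS + (lam / 2) * Δ (j - 1) (k + 1)) / ((k : ℝ) * lam / n + lam / 2)

namespace IsLineAgeRecursion

variable {n0 : ℕ} {lamS lam n : ℝ} {Δ : ℕ → ℕ → ℝ}

theorem eq_of_mirror (hΔ : IsLineAgeRecursion n0 lamS lam n Δ) {j j' k : ℕ} (hj : 1 ≤ j)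
    (hj' : 1 ≤ j') (hk : 1 ≤ k) (hsum : j + j' + k = n0 + 2) : Δ j k = Δ j' k := by
  have hkn : k ≤ n0 := by omega
  induction hkn using Nat.decreasingInduction generalizing j j' with
  | self =>
    obtain ⟨rfl, rfl⟩ : j = 1 ∧ j' = 1 := by omega
    rfl
  | of_succ k hkn ih =>
    have corner : ∀ i, 1 < i → i + k = n0 + 1 → Δ 1 k = Δ i k := fun i hi hik => by
      rw [hΔ.left k hk hkn, hΔ.right i k hi hk hik,
        ih le_rfl (by omega : 1 ≤ i - 1) (by omega) (by omega)]
    rcases hj.eq_or_lt with rfl | hj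
    · exact corner j' (by omega) (by omega)
    rcases hj'.eq_or_lt with rfl | hj'
    · exact (corner j hj (by omega)).symm
    rw [hΔ.mid j k hj hk (by omega), hΔ.mid j' k hj' hk (by omega),
      ih hj.le (by omega : 1 ≤ j' - 1) (by omega) (by omega),
      ih (by omega : 1 ≤ j - 1) hj'.le (by omega) (by omega)]
    ring

theorem rate_mul_corner_le (hΔ : IsLineAgeRecursion n0 lamS lam n Δ) (hlamS : 0 ≤ lamS)
    (hlam : 0 < lam) (hn : 0 < n) {k : ℕ} (hk : 1 ≤ k) (hkn : k ≤ n0) :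
    (k : ℝ) * lam / n * Δ 1 k ≤ lamS := by
  induction hkn using Nat.decreasingInduction with
  | self =>
    have : (n0 : ℝ) ≠ 0 := by positivity
    rw [hΔ.full]
    field_simp
    rfl
  | of_succ k hkn ih =>
    have hX : (k : ℝ) * lam / n * Δ 1 (k + 1) ≤ lamS :=
      mul_le_of_le_of_mul_le (by positivity) (by gcongr; simp) hlamS (ih (by omega))
    rw [hΔ.left k hk hkn, mul_div_assoc', div_le_iff₀ (by positivity)]
    linarith [mul_le_mul_of_nonneg_left hX (by positivity : (0 : ℝ) ≤ lam / 2)]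

theorem corner_succ_le (hΔ : IsLineAgeRecursion n0 lamS lam n Δ) (hlamS : 0 ≤ lamS)
    (hlam : 0 < lam) (hn : 0 < n) {k : ℕ} (hk : 1 ≤ k) (hkn : k < n0) :
    Δ 1 (k + 1) ≤ Δ 1 k := by
  have hX : (k : ℝ) * lam / n * Δ 1 (k + 1) ≤ lamS :=
    mul_le_of_le_of_mul_le (by positivity) (by gcongr; simp) hlamS
      (hΔ.rate_mul_corner_le hlamS hlam hn (by omega) hkn)
  rw [hΔ.left k hk hkn, le_div_iff₀ (by positivity)]
  linarith

theorem succ_le (hΔ : IsLineAgeRecursion n0 lamS lam n Δ) (hlamS : 0 ≤ lamS)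
    (hlam : 0 < lam) (hn : 0 < n) {j k : ℕ} (hj : 1 ≤ j) (hk : 1 ≤ k)
    (hjk : 2 * j + k ≤ n0 + 1) :
    Δ (j + 1) k ≤ Δ j k := by
  have hkn : k ≤ n0 := by omega
  induction hkn using Nat.decreasingInduction generalizing j with
  | self => omega
  | of_succ k hkn ih =>
    rcases hjk.eq_or_lt with hmirror | hjk
    · exact (hΔ.eq_of_mirror (by omega) hj hk (by omega)).le
    have hD : 0 < (k : ℝ) * lam / n + lam := by positivity
    rcases hj.eq_or_lt with rfl | hj
    · have hY : Δ 2 (k + 1) ≤ Δ 1 k :=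
        (ih le_rfl (by omega) (by omega)).trans (hΔ.corner_succ_le hlamS hlam hn hk hkn)
      have hcorner := hΔ.left k hk hkn
      rw [eq_div_iff (by positivity)] at hcorner
      rw [hΔ.mid 2 k one_lt_two hk (by omega), div_le_iff₀ hD]
      linarith [mul_le_mul_of_nonneg_left hY (by positivity : (0 : ℝ) ≤ lam / 2)]
    · obtain ⟨i, rfl⟩ : ∃ i, j = i + 1 := ⟨j - 1, by omega⟩
      have hnum : Δ (i + 1 + 1) (k + 1) ≤ Δ i (k + 1) :=
        (ih (by omega) (by omega) (by omega)).trans (ih (by omega) (by omega) (by omega))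
      rw [hΔ.mid (i + 1 + 1) k (by omega) hk (by omega), hΔ.mid (i + 1) k hj hk (by omega)]
      gcongr ?_ / _
      simp only [Nat.add_sub_cancel]
      linarith [mul_le_mul_of_nonneg_left hnum (by positivity : (0 : ℝ) ≤ lam / 2)]

end IsLineAgeRecursion

theorem line_age_decreases_towards_center_general
    (n0 : ℕ) (lamS lam n : ℝ)
    (hlamS : 0 < lamS) (hlam : 0 < lam) (hn : 0 < n)
    (Δ : ℕ → ℕ → ℝ)
    (hfull : Δ 1 n0 = lamS * n / ((n0 : ℝ) * lam))
    (hmid : ∀ j k : ℕ, 1 < j → 1 ≤ k → j + k ≤ n0 →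
      Δ j k = (lamS + (lam / 2) * Δ j (k + 1) + (lam / 2) * Δ (j - 1) (k + 1))
        / ((k : ℝ) * lam / n + lam))
    (hleft : ∀ k : ℕ, 1 ≤ k → k < n0 →
      Δ 1 k = (lamS + (lam / 2) * Δ 1 (k + 1)) / ((k : ℝ) * lam / n + lam / 2))
    (hright : ∀ j k : ℕ, 1 < j → 1 ≤ k → j + k = n0 + 1 →
      Δ j k = (lamS + (lam / 2) * Δ (j - 1) (k + 1)) / ((k : ℝ) * lam / n + lam / 2))
    (i : ℕ) (hi : 1 ≤ i) (hihalf : 2 * i ≤ n0) :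
    Δ (i + 1) 1 ≤ Δ i 1 :=
  (IsLineAgeRecursion.mk hfull hmid hleft hright).succ_le hlamS.le hlam hn hi le_rfl (by omega)

/-- In a line network of `n0` gossiping nodes (source rate `lamS`, per-node update rate
`lam/n`, per-link rate `lam/2`), with `Δ j k` the stationary version age of the contiguous
set `S_{j,k} = {j, …, j+k-1}`, the expected version age is highest at the corner nodes and
decreases towards the center: `Δ (i+1) 1 ≤ Δ i 1` for `1 ≤ i ≤ n0/2`, `i + 1 ≤ n0`. -/
theorem line_age_decreases_towards_center
    (n0 : ℕ) (lamS lam n : ℝ)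
    (hn0 : 0 < n0) (hlamS : 0 < lamS) (hlam : 0 < lam) (hn : 0 < n)
    (Δ : ℕ → ℕ → ℝ)
    (hfull : Δ 1 n0 = lamS * n / ((n0 : ℝ) * lam))
    (hmid : ∀ j k : ℕ, 1 < j → 1 ≤ k → j + k ≤ n0 →
      Δ j k = (lamS + (lam / 2) * Δ j (k + 1) + (lam / 2) * Δ (j - 1) (k + 1))
        / ((k : ℝ) * lam / n + lam))
    (hleft : ∀ k : ℕ, 1 ≤ k → k < n0 →
      Δ 1 k = (lamS + (lam / 2) * Δ 1 (k + 1)) / ((k : ℝ) * lam / n + lam / 2))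
    (hright : ∀ j k : ℕ, 1 < j → 1 ≤ k → j + k = n0 + 1 →
      Δ j k = (lamS + (lam / 2) * Δ (j - 1) (k + 1)) / ((k : ℝ) * lam / n + lam / 2))
    (hmono : ∀ j k j' k' : ℕ, 1 ≤ j' → 1 ≤ k → j' ≤ j → j + k ≤ j' + k' → j' + k' ≤ n0 + 1 →
      Δ j' k' ≤ Δ j k)
    (i : ℕ) (hi : 1 ≤ i) (hihalf : 2 * i ≤ n0) (hin0 : i + 1 ≤ n0) :
    Δ (i + 1) 1 ≤ Δ i 1 :=
  line_age_decreases_towards_center_general n0 lamS lam n hlamS hlam hn Δ hfull hmid hleft hright i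
    hi hihalf
end

section
/- Let Δ be a line age function on n0 nodes and Δ^r a ring age function on n0 nodes, both with the same parameters λs, λ, n. Then for every valid pair (j,k), one has Δ^r_k ≤ Δ_{j,k}; in particular, the single-node version age in the ring lower-bounds the version age of every node of the line network: Δ^r_1 ≤ Δ_{i,1} for all 1 ≤ i ≤ n0. -/
/-!
Both families are pinned down at the full set, where they take the same value, and are
determined from there by recursions that decrease in `k`. Using its monotonicity, the ring
recursion `Δr k (kλ/n + λ) = λs + λ Δr (k+1)` yields the one-sided version
`Δr k (kλ/n + λ/2) ≤ λs + (λ/2) Δr (k+1)`, which has the shape of the line recursion at the two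
ends of the line. A downward induction on `k` then compares `Δr k` with `Δ j k` through whichever
of the three line recursions applies to `(j, k)`.
-/

structure IsRingAgeFunction (n0 : ℕ) (lamS lam n : ℝ) (Δr : ℕ → ℝ) : Prop where
  full : Δr n0 = lamS * n / ((n0 : ℝ) * lam)
  succ : ∀ k : ℕ, 1 ≤ k → k + 1 ≤ n0 →
    Δr k = (lamS + lam * Δr (k + 1)) / ((k : ℝ) * lam / n + lam)
  succ_le : ∀ k : ℕ, 1 ≤ k → k + 1 ≤ n0 → Δr (k + 1) ≤ Δr k

namespace IsRingAgeFunction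

variable {n0 : ℕ} {lamS lam n : ℝ} {Δr : ℕ → ℝ}

theorem mul_denom_eq (hr : IsRingAgeFunction n0 lamS lam n Δr) (hlam : 0 < lam) (hn : 0 < n)
    {k : ℕ} (hk : 1 ≤ k) (hkn : k + 1 ≤ n0) :
    Δr k * ((k : ℝ) * lam / n + lam) = lamS + lam * Δr (k + 1) :=
  (eq_div_iff (by positivity)).1 (hr.succ k hk hkn)

theorem mul_half_denom_le (hr : IsRingAgeFunction n0 lamS lam n Δr) (hlam : 0 < lam)
    (hn : 0 < n) {k : ℕ} (hk : 1 ≤ k) (hkn : k + 1 ≤ n0) :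
    Δr k * ((k : ℝ) * lam / n + lam / 2) ≤ lamS + lam / 2 * Δr (k + 1) := by
  have hsucc := hr.mul_denom_eq hlam hn hk hkn
  nlinarith [mul_nonneg hlam.le (sub_nonneg.2 (hr.succ_le k hk hkn))]

variable {Δ : ℕ → ℕ → ℝ}

theorem le_lineAge_of_succ (hr : IsRingAgeFunction n0 lamS lam n Δr)
    (hΔ : IsLineAgeRecursion n0 lamS lam n Δ) (hlam : 0 < lam) (hn : 0 < n) {k : ℕ}
    (hk : 1 ≤ k) (hkn : k < n0) (ih : ∀ j, 1 ≤ j → j + (k + 1) ≤ n0 + 1 → Δr (k + 1) ≤ Δ j (k + 1))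
    {j : ℕ} (hj : 1 ≤ j) (hjk : j + k ≤ n0 + 1) : Δr k ≤ Δ j k := by
  have hedge := hr.mul_half_denom_le hlam hn hk hkn
  rcases (by omega : j = 1 ∨ (1 < j ∧ j + k ≤ n0) ∨ (1 < j ∧ j + k = n0 + 1)) with
    rfl | ⟨hj1, hjk⟩ | ⟨hj1, hjk⟩
  · rw [hΔ.left k hk hkn, le_div_iff₀ (by positivity)]
    have := ih 1 le_rfl (by omega)
    calc _ ≤ lamS + lam / 2 * Δr (k + 1) := hedge
      _ ≤ _ := by gcongr
  · rw [hΔ.mid j k hj1 hk hjk, le_div_iff₀ (by positivity), hr.mul_denom_eq hlam hn hk hkn]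
    have hhalf : 0 ≤ lam / 2 := by positivity
    linarith [mul_le_mul_of_nonneg_left (ih j hj (by omega)) hhalf,
      mul_le_mul_of_nonneg_left (ih (j - 1) (by omega) (by omega)) hhalf]
  · rw [hΔ.right j k hj1 hk hjk, le_div_iff₀ (by positivity)]
    have := ih (j - 1) (by omega) (by omega)
    calc _ ≤ lamS + lam / 2 * Δr (k + 1) := hedge
      _ ≤ _ := by gcongr

theorem le_lineAge (hr : IsRingAgeFunction n0 lamS lam n Δr)
    (hΔ : IsLineAgeRecursion n0 lamS lam n Δ) (hlam : 0 < lam) (hn : 0 < n) {j k : ℕ}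
    (hj : 1 ≤ j) (hk : 1 ≤ k) (hjk : j + k ≤ n0 + 1) : Δr k ≤ Δ j k := by
  have hkn : k ≤ n0 := by omega
  induction hkn using Nat.decreasingInduction generalizing j with
  | self =>
    obtain rfl : j = 1 := by omega
    rw [hr.full, hΔ.full]
  | of_succ k hkn ih =>
    exact hr.le_lineAge_of_succ hΔ hlam hn hk hkn (fun j hj hjk => ih hj (by omega) hjk) hj hjk

end IsRingAgeFunction

theorem ring_age_lower_bounds_line_age_general
    (n0 : ℕ) (lamS lam n : ℝ)
    (hlam : 0 < lam) (hn : 0 < n)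
    (Δ : ℕ → ℕ → ℝ)
    (hfull : Δ 1 n0 = lamS * n / ((n0 : ℝ) * lam))
    (hmid : ∀ j k : ℕ, 1 < j → 1 ≤ k → j + k ≤ n0 →
      Δ j k = (lamS + (lam / 2) * Δ j (k + 1) + (lam / 2) * Δ (j - 1) (k + 1))
        / ((k : ℝ) * lam / n + lam))
    (hleft : ∀ k : ℕ, 1 ≤ k → k < n0 →
      Δ 1 k = (lamS + (lam / 2) * Δ 1 (k + 1)) / ((k : ℝ) * lam / n + lam / 2))
    (hright : ∀ j k : ℕ, 1 < j → 1 ≤ k → j + k = n0 + 1 →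
      Δ j k = (lamS + (lam / 2) * Δ (j - 1) (k + 1)) / ((k : ℝ) * lam / n + lam / 2))
    (Δr : ℕ → ℝ)
    (hrfull : Δr n0 = lamS * n / ((n0 : ℝ) * lam))
    (hrrec : ∀ k : ℕ, 1 ≤ k → k + 1 ≤ n0 →
      Δr k = (lamS + lam * Δr (k + 1)) / ((k : ℝ) * lam / n + lam))
    (hrmono : ∀ k : ℕ, 1 ≤ k → k + 1 ≤ n0 → Δr (k + 1) ≤ Δr k) :
    (∀ j k : ℕ, 1 ≤ j → 1 ≤ k → j + k ≤ n0 + 1 → Δr k ≤ Δ j k) ∧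
    (∀ i : ℕ, 1 ≤ i → i ≤ n0 → Δr 1 ≤ Δ i 1) := by
  have hr : IsRingAgeFunction n0 lamS lam n Δr := ⟨hrfull, hrrec, hrmono⟩
  have hΔ : IsLineAgeRecursion n0 lamS lam n Δ := ⟨hfull, hmid, hleft, hright⟩
  have hle := fun j k (hj : 1 ≤ j) (hk : 1 ≤ k) hjk => hr.le_lineAge hΔ hlam hn hj hk hjk
  exact ⟨hle, fun i hi hin => hle i 1 hi le_rfl (by omega)⟩

/-- Let `Δ` be a line age function on `n0` nodes and `Δr` a ring age function on `n0` nodes,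
both with the same parameters `lamS, lam, n`. Then for every valid pair `(j,k)` one has
`Δr k ≤ Δ j k`; in particular the single-node version age in the ring lower-bounds the
version age of every node of the line network: `Δr 1 ≤ Δ i 1` for all `1 ≤ i ≤ n0`. -/
theorem ring_age_lower_bounds_line_age
    (n0 : ℕ) (lamS lam n : ℝ)
    (hn0 : 0 < n0) (hlamS : 0 < lamS) (hlam : 0 < lam) (hn : 0 < n)
    (Δ : ℕ → ℕ → ℝ)
    (hfull : Δ 1 n0 = lamS * n / ((n0 : ℝ) * lam))
    (hmid : ∀ j k : ℕ, 1 < j → 1 ≤ k → j + k ≤ n0 →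
      Δ j k = (lamS + (lam / 2) * Δ j (k + 1) + (lam / 2) * Δ (j - 1) (k + 1))
        / ((k : ℝ) * lam / n + lam))
    (hleft : ∀ k : ℕ, 1 ≤ k → k < n0 →
      Δ 1 k = (lamS + (lam / 2) * Δ 1 (k + 1)) / ((k : ℝ) * lam / n + lam / 2))
    (hright : ∀ j k : ℕ, 1 < j → 1 ≤ k → j + k = n0 + 1 →
      Δ j k = (lamS + (lam / 2) * Δ (j - 1) (k + 1)) / ((k : ℝ) * lam / n + lam / 2))
    (hmono : ∀ j k j' k' : ℕ, 1 ≤ j' → 1 ≤ k → j' ≤ j → j + k ≤ j' + k' → j' + k' ≤ n0 + 1 →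
      Δ j' k' ≤ Δ j k)
    (Δr : ℕ → ℝ)
    (hrfull : Δr n0 = lamS * n / ((n0 : ℝ) * lam))
    (hrrec : ∀ k : ℕ, 1 ≤ k → k + 1 ≤ n0 →
      Δr k = (lamS + lam * Δr (k + 1)) / ((k : ℝ) * lam / n + lam))
    (hrmono : ∀ k : ℕ, 1 ≤ k → k + 1 ≤ n0 → Δr (k + 1) ≤ Δr k) :
    (∀ j k : ℕ, 1 ≤ j → 1 ≤ k → j + k ≤ n0 + 1 → Δr k ≤ Δ j k) ∧
    (∀ i : ℕ, 1 ≤ i → i ≤ n0 → Δr 1 ≤ Δ i 1) :=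
  ring_age_lower_bounds_line_age_general n0 lamS lam n hlam hn Δ hfull hmid hleft hright Δr hrfull
    hrrec hrmono
end

section
/- Let Δ^r : {1,...,n0} → ℝ satisfy the ring recursion Δ^r_{n0} = λs·n/(n0·λ) and Δ^r_k = (λs + λ·Δ^r_{k+1})/(k·λ/n + λ) for 1 ≤ k ≤ n0−1. Then the single-node version age admits the closed form Δ^r_1 = (λs/λ)·[ Σ_{j=1}^{n0−1} Π_{k=1}^{j} 1/(k/n + 1) + (n/n0)·Π_{k=1}^{n0−1} 1/(k/n + 1) ]. -/
/-!
Dividing numerator and denominator of the recursion by `λ` puts it in the affine form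
`Δ_k = a_k (λs/λ + Δ_{k+1})` with `a_k = 1/(k/n + 1)`, and `Δ_{n0} = (λs/λ)(n/n0)`.
Unrolling an affine backward recurrence `x_k = a_k (c + x_{k+1})` from `N` down to `m` gives
`x_m = c Σ_{m ≤ j < N} Π_{m ≤ i ≤ j} a_i + (Π_{m ≤ i < N} a_i) x_N`,
which is the closed form.
-/

open Finset

theorem prod_Icc_eq_mul_prod_Icc_add_one {M : Type*} [CommMonoid M] (f : ℕ → M) {a b : ℕ}
    (hab : a ≤ b) : ∏ i ∈ Icc a b, f i = f a * ∏ i ∈ Icc (a + 1) b, f i := by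
  rw [← Ico_add_one_right_eq_Icc, ← Ico_add_one_right_eq_Icc,
    prod_eq_prod_Ico_succ_bot (by omega)]

theorem sum_Ico_prod_Icc_eq_mul_one_add {R : Type*} [CommSemiring R] (a : ℕ → R) {k N : ℕ}
    (hkN : k < N) : ∑ j ∈ Ico k N, ∏ i ∈ Icc k j, a i
      = a k * (1 + ∑ j ∈ Ico (k + 1) N, ∏ i ∈ Icc (k + 1) j, a i) := by
  rw [sum_eq_sum_Ico_succ_bot hkN, Icc_self, prod_singleton, mul_add, mul_one, mul_sum]
  congr 1
  refine sum_congr rfl fun j hj => prod_Icc_eq_mul_prod_Icc_add_one a ?_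
  rw [mem_Ico] at hj
  omega

theorem eq_sum_prod_of_backward_recurrence {R : Type*} [CommSemiring R] (a x : ℕ → R) (c : R)
    {m N : ℕ} (hmN : m ≤ N) (hx : ∀ k, m ≤ k → k < N → x k = a k * (c + x (k + 1))) :
    x m = c * ∑ j ∈ Ico m N, ∏ i ∈ Icc m j, a i + (∏ i ∈ Ico m N, a i) * x N := by
  refine Nat.decreasingInduction' (P := fun k =>
      x k = c * ∑ j ∈ Ico k N, ∏ i ∈ Icc k j, a i + (∏ i ∈ Ico k N, a i) * x N)
    (fun k hkN hmk ih => ?_) hmN (by simp)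
  rw [hx k hmk hkN, ih, sum_Ico_prod_Icc_eq_mul_one_add a hkN, prod_eq_prod_Ico_succ_bot hkN]
  ring

theorem ring_age_closed_form_general
    (n0 : ℕ) (lamS lam n : ℝ)
    (hn0 : 0 < n0) (hlam : 0 < lam)
    (Δr : ℕ → ℝ)
    (hrfull : Δr n0 = lamS * n / ((n0 : ℝ) * lam))
    (hrrec : ∀ k : ℕ, 1 ≤ k → k + 1 ≤ n0 →
      Δr k = (lamS + lam * Δr (k + 1)) / ((k : ℝ) * lam / n + lam)) :
    Δr 1 = (lamS / lam) *
      ((∑ j ∈ Finset.Icc 1 (n0 - 1), ∏ k ∈ Finset.Icc 1 j, 1 / ((k : ℝ) / n + 1))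
        + (n / (n0 : ℝ)) * ∏ k ∈ Finset.Icc 1 (n0 - 1), 1 / ((k : ℝ) / n + 1)) := by
  have hstep : ∀ k, 1 ≤ k → k < n0 →
      Δr k = 1 / ((k : ℝ) / n + 1) * (lamS / lam + Δr (k + 1)) := by
    intro k hk hkn
    rw [hrrec k hk hkn, one_div_mul_eq_div,
      show (k : ℝ) * lam / n + lam = lam * (k / n + 1) by ring,
      ← div_div, add_div, mul_div_cancel_left₀ _ hlam.ne']
  have hlast : Δr n0 = lamS / lam * (n / n0) := by rw [hrfull]; ring
  obtain ⟨N, rfl⟩ : ∃ N, n0 = N + 1 := Nat.exists_eq_add_one.mpr hn0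
  rw [eq_sum_prod_of_backward_recurrence _ _ _ (by omega) hstep, hlast, Nat.add_sub_cancel,
    ← Ico_add_one_right_eq_Icc]
  ring

/-- Closed form for the single-node version age in a ring of `n0` gossiping nodes: if
`Δr : {1,…,n0} → ℝ` satisfies the ring recursion `Δr n0 = lamS·n/(n0·lam)` and
`Δr k = (lamS + lam·Δr (k+1)) / (k·lam/n + lam)` for `1 ≤ k ≤ n0 - 1`, then
`Δr 1 = (lamS/lam)·[ Σ_{j=1}^{n0-1} Π_{k=1}^{j} 1/(k/n+1) + (n/n0)·Π_{k=1}^{n0-1} 1/(k/n+1) ]`. -/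
theorem ring_age_closed_form
    (n0 : ℕ) (lamS lam n : ℝ)
    (hn0 : 0 < n0) (hlamS : 0 < lamS) (hlam : 0 < lam) (hn : 0 < n)
    (Δr : ℕ → ℝ)
    (hrfull : Δr n0 = lamS * n / ((n0 : ℝ) * lam))
    (hrrec : ∀ k : ℕ, 1 ≤ k → k + 1 ≤ n0 →
      Δr k = (lamS + lam * Δr (k + 1)) / ((k : ℝ) * lam / n + lam)) :
    Δr 1 = (lamS / lam) *
      ((∑ j ∈ Finset.Icc 1 (n0 - 1), ∏ k ∈ Finset.Icc 1 j, 1 / ((k : ℝ) / n + 1))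
        + (n / (n0 : ℝ)) * ∏ k ∈ Finset.Icc 1 (n0 - 1), 1 / ((k : ℝ) / n + 1)) :=
  ring_age_closed_form_general n0 lamS lam n hn0 hlam Δr hrfull hrrec
end

section
/- For every positive integer n0 and all positive reals m, n with m ≤ n, one has Σ_{j=1}^{n0−1} Π_{k=1}^{j} 1/(k/m + 1) + (m/n0)·Π_{k=1}^{n0−1} 1/(k/m + 1) ≤ Σ_{j=1}^{n0−1} Π_{k=1}^{j} 1/(k/n + 1) + (n/n0)·Π_{k=1}^{n0−1} 1/(k/n + 1). In particular, taking m = n/2, the closed-form corner age of the line network is at most twice the closed-form age of the ring network of the same size: (2λs/λ)·[ Σ_{j=1}^{n0−1} Π_{k=1}^{j} 1/(2k/n + 1) + (n/(2n0))·Π_{k=1}^{n0−1} 1/(2k/n + 1) ] ≤ 2·(λs/λ)·[ Σ_{j=1}^{n0−1} Π_{k=1}^{j} 1/(k/n + 1) + (n/n0)·Π_{k=1}^{n0−1} 1/(k/n + 1) ] for any λs, λ > 0. -/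
open Finset

noncomputable def ringAgeProduct (m : ℝ) (j : ℕ) : ℝ :=
  ∏ k ∈ Icc 1 j, 1 / ((k : ℝ) / m + 1)

/-- The bracketed ring-age expression `A(m)` for a ring of `n0` nodes. -/
noncomputable def ringAge (n0 : ℕ) (m : ℝ) : ℝ :=
  (∑ j ∈ Icc 1 (n0 - 1), ringAgeProduct m j) + (m / n0) * ringAgeProduct m (n0 - 1)

theorem one_div_div_add_one_le_of_le {m n x : ℝ} (hm : 0 < m) (hmn : m ≤ n) (hx : 0 ≤ x) :
    1 / (x / m + 1) ≤ 1 / (x / n + 1) :=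
  one_div_le_one_div_of_le (by have := hm.trans_le hmn; positivity) (by gcongr)

theorem ringAgeProduct_nonneg {m : ℝ} (hm : 0 ≤ m) (j : ℕ) : 0 ≤ ringAgeProduct m j :=
  prod_nonneg fun _ _ => by positivity

theorem ringAgeProduct_mono {m n : ℝ} (hm : 0 < m) (hmn : m ≤ n) (j : ℕ) :
    ringAgeProduct m j ≤ ringAgeProduct n j :=
  prod_le_prod (fun _ _ => by positivity)
    fun k _ => one_div_div_add_one_le_of_le hm hmn k.cast_nonneg

theorem ringAge_mono (n0 : ℕ) {m n : ℝ} (hm : 0 < m) (hmn : m ≤ n) :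
    ringAge n0 m ≤ ringAge n0 n := by
  have hn : 0 < n := hm.trans_le hmn
  unfold ringAge
  gcongr with j
  · exact ringAgeProduct_mono hm hmn j
  · exact ringAgeProduct_nonneg hm.le _
  · exact ringAgeProduct_mono hm hmn _

/-- Halving the source rate turns the ring expression into the corner expression of the line. -/
theorem ringAge_half (n0 : ℕ) (n : ℝ) :
    ringAge n0 (n / 2) =
      (∑ j ∈ Icc 1 (n0 - 1), ∏ k ∈ Icc 1 j, 1 / (2 * (k : ℝ) / n + 1))
        + (n / (2 * (n0 : ℝ))) * ∏ k ∈ Icc 1 (n0 - 1), 1 / (2 * (k : ℝ) / n + 1) := by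
  have hdiv : ∀ k : ℕ, (k : ℝ) / (n / 2) = 2 * k / n := fun k => by
    rw [div_div_eq_mul_div, mul_comm]
  simp only [ringAge, ringAgeProduct, hdiv, div_div, mul_comm (2 : ℝ)]

theorem ring_age_expression_monotone_general
    (n0 : ℕ) (m n lamS lam : ℝ)
    (hm : 0 < m) (hn : 0 < n) (hmn : m ≤ n)
    (hlamS : 0 < lamS) (hlam : 0 < lam) :
    ((∑ j ∈ Finset.Icc 1 (n0 - 1), ∏ k ∈ Finset.Icc 1 j, 1 / ((k : ℝ) / m + 1))
        + (m / (n0 : ℝ)) * ∏ k ∈ Finset.Icc 1 (n0 - 1), 1 / ((k : ℝ) / m + 1)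
      ≤ (∑ j ∈ Finset.Icc 1 (n0 - 1), ∏ k ∈ Finset.Icc 1 j, 1 / ((k : ℝ) / n + 1))
        + (n / (n0 : ℝ)) * ∏ k ∈ Finset.Icc 1 (n0 - 1), 1 / ((k : ℝ) / n + 1)) ∧
    ((2 * lamS / lam) *
        ((∑ j ∈ Finset.Icc 1 (n0 - 1), ∏ k ∈ Finset.Icc 1 j, 1 / (2 * (k : ℝ) / n + 1))
          + (n / (2 * (n0 : ℝ))) * ∏ k ∈ Finset.Icc 1 (n0 - 1), 1 / (2 * (k : ℝ) / n + 1))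
      ≤ 2 * (lamS / lam) *
        ((∑ j ∈ Finset.Icc 1 (n0 - 1), ∏ k ∈ Finset.Icc 1 j, 1 / ((k : ℝ) / n + 1))
          + (n / (n0 : ℝ)) * ∏ k ∈ Finset.Icc 1 (n0 - 1), 1 / ((k : ℝ) / n + 1))) := by
  refine ⟨ringAge_mono n0 hm hmn, ?_⟩
  rw [← ringAge_half, mul_div_assoc]
  have hhalf : ringAge n0 (n / 2) ≤ ringAge n0 n := ringAge_mono n0 (by positivity) (by linarith)
  exact mul_le_mul_of_nonneg_left hhalf (by positivity)

/-- For every positive integer `n0` and positive reals `m ≤ n`, the closed-form ring-age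
expression `A(m) = Σ_{j=1}^{n0-1} Π_{k=1}^{j} 1/(k/m+1) + (m/n0)·Π_{k=1}^{n0-1} 1/(k/m+1)` is
monotone: `A(m) ≤ A(n)`. In particular (taking `m = n/2`), the closed-form corner age of the
line network is at most twice the closed-form age of the ring network of the same size. -/
theorem ring_age_expression_monotone
    (n0 : ℕ) (m n lamS lam : ℝ)
    (hn0 : 0 < n0) (hm : 0 < m) (hn : 0 < n) (hmn : m ≤ n)
    (hlamS : 0 < lamS) (hlam : 0 < lam) :
    ((∑ j ∈ Finset.Icc 1 (n0 - 1), ∏ k ∈ Finset.Icc 1 j, 1 / ((k : ℝ) / m + 1))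
        + (m / (n0 : ℝ)) * ∏ k ∈ Finset.Icc 1 (n0 - 1), 1 / ((k : ℝ) / m + 1)
      ≤ (∑ j ∈ Finset.Icc 1 (n0 - 1), ∏ k ∈ Finset.Icc 1 j, 1 / ((k : ℝ) / n + 1))
        + (n / (n0 : ℝ)) * ∏ k ∈ Finset.Icc 1 (n0 - 1), 1 / ((k : ℝ) / n + 1)) ∧
    ((2 * lamS / lam) *
        ((∑ j ∈ Finset.Icc 1 (n0 - 1), ∏ k ∈ Finset.Icc 1 j, 1 / (2 * (k : ℝ) / n + 1))
          + (n / (2 * (n0 : ℝ))) * ∏ k ∈ Finset.Icc 1 (n0 - 1), 1 / (2 * (k : ℝ) / n + 1))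
      ≤ 2 * (lamS / lam) *
        ((∑ j ∈ Finset.Icc 1 (n0 - 1), ∏ k ∈ Finset.Icc 1 j, 1 / ((k : ℝ) / n + 1))
          + (n / (n0 : ℝ)) * ∏ k ∈ Finset.Icc 1 (n0 - 1), 1 / ((k : ℝ) / n + 1))) :=
  ring_age_expression_monotone_general n0 m n lamS lam hm hn hmn hlamS hlam
end

section
/- Let Δ be a line age function on n0 nodes and Δ^r a ring age function on n0 nodes, both with the same parameters λs, λ, n. Then for every node i with 1 ≤ i ≤ n0, the version ages are sandwiched as Δ^r_1 ≤ Δ_{i,1} ≤ 2·Δ^r_1. -/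
/-!
By downward induction on `k`, `Δ^r_k ≤ Δ_{j,k} ≤ 2 Δ^r_k` for every contiguous set `S_{j,k}`,
starting from `Δ_{1,n0} = Δ^r_{n0}`. Both recursions feed a set of size `k` from sets of size
`k + 1`: the ring at rate `λ` from one set, the line either at rate `λ/2` from each of two sets
(with the ring's denominator) or, for the boundary sets, at rate `λ/2` from one set with the
denominator lowered by `λ/2`. In each case the sandwich propagates as soon as
`Δ^r_{k+1} · kλ/n ≤ λs`, which is the monotonicity `Δ^r_{k+1} ≤ Δ^r_k` read through the ring
recursion.
-/

def Sandwiched (r x : ℝ) : Prop := r ≤ x ∧ x ≤ 2 * r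

lemma mul_le_of_le_div_add_mul {s l a y : ℝ} (h : 0 < a + l) (hy : y ≤ (s + l * y) / (a + l)) :
    y * a ≤ s := by
  rw [le_div_iff₀ h] at hy
  linarith

namespace Sandwiched

variable {lamS lam a Y X X₁ X₂ : ℝ}

lemma nonneg {r x : ℝ} (h : Sandwiched r x) : 0 ≤ r := by
  linarith [h.1, h.2]

lemma of_eq {r : ℝ} (hr : 0 ≤ r) : Sandwiched r r :=
  ⟨le_rfl, by linarith⟩

lemma boundary_step (ha : 0 ≤ a) (hlam : 0 < lam)
    (hring : Y ≤ (lamS + lam * Y) / (a + lam)) (h : Sandwiched Y X) :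
    Sandwiched ((lamS + lam * Y) / (a + lam)) ((lamS + lam / 2 * X) / (a + lam / 2)) := by
  have hYa := mul_le_of_le_div_add_mul (by positivity) hring
  have hY0 := h.nonneg
  obtain ⟨hXl, hXu⟩ := h
  constructor
  · rw [div_le_div_iff₀ (by positivity) (by positivity)]
    nlinarith [mul_le_mul_of_nonneg_left hXl (add_nonneg ha hlam.le)]
  · rw [← mul_div_assoc, div_le_div_iff₀ (by positivity) (by positivity)]
    have hfed : 0 ≤ lamS + lam * Y := by nlinarith [mul_nonneg hY0 ha]
    nlinarith [mul_le_mul_of_nonneg_left hXu (add_nonneg ha hlam.le), mul_nonneg hfed ha]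

lemma interior_step (ha : 0 ≤ a) (hlam : 0 < lam)
    (hring : Y ≤ (lamS + lam * Y) / (a + lam)) (h₁ : Sandwiched Y X₁) (h₂ : Sandwiched Y X₂) :
    Sandwiched ((lamS + lam * Y) / (a + lam))
      ((lamS + lam / 2 * X₁ + lam / 2 * X₂) / (a + lam)) := by
  have hYa := mul_le_of_le_div_add_mul (by positivity) hring
  have hlamS : 0 ≤ lamS := le_trans (mul_nonneg h₁.nonneg ha) hYa
  constructor
  · gcongr ?_ / _
    nlinarith [h₁.1, h₂.1]
  · rw [← mul_div_assoc]
    gcongr ?_ / _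
    nlinarith [h₁.2, h₂.2]

end Sandwiched

lemma sandwiched_ring_age_line_age {n0 : ℕ} {lamS lam n : ℝ} (hlam : 0 < lam) (hn : 0 ≤ n)
    {Δ : ℕ → ℕ → ℝ} {Δr : ℕ → ℝ}
    (hbase : Sandwiched (Δr n0) (Δ 1 n0))
    (hmid : ∀ j k : ℕ, 1 < j → 1 ≤ k → j + k ≤ n0 →
      Δ j k = (lamS + (lam / 2) * Δ j (k + 1) + (lam / 2) * Δ (j - 1) (k + 1))
        / ((k : ℝ) * lam / n + lam))
    (hleft : ∀ k : ℕ, 1 ≤ k → k < n0 →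
      Δ 1 k = (lamS + (lam / 2) * Δ 1 (k + 1)) / ((k : ℝ) * lam / n + lam / 2))
    (hright : ∀ j k : ℕ, 1 < j → 1 ≤ k → j + k = n0 + 1 →
      Δ j k = (lamS + (lam / 2) * Δ (j - 1) (k + 1)) / ((k : ℝ) * lam / n + lam / 2))
    (hrrec : ∀ k : ℕ, 1 ≤ k → k + 1 ≤ n0 →
      Δr k = (lamS + lam * Δr (k + 1)) / ((k : ℝ) * lam / n + lam))
    (hrmono : ∀ k : ℕ, 1 ≤ k → k + 1 ≤ n0 → Δr (k + 1) ≤ Δr k)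
    {k : ℕ} (hkn : k ≤ n0) (hk : 1 ≤ k) :
    ∀ j, 1 ≤ j → j + k ≤ n0 + 1 → Sandwiched (Δr k) (Δ j k) := by
  induction hkn using Nat.decreasingInduction with
  | self =>
    intro j hj hjn
    obtain rfl : j = 1 := by omega
    exact hbase
  | of_succ k hkn ih =>
    intro j hj hjk
    have ha : 0 ≤ (k : ℝ) * lam / n := by positivity
    have hring := hrrec k hk hkn ▸ hrmono k hk hkn
    rw [hrrec k hk hkn]
    rcases Nat.lt_or_ge 1 j with hj1 | hj1
    · rcases Nat.lt_or_ge (j + k) (n0 + 1) with hjk' | hjk'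
      · rw [hmid j k hj1 hk (by omega)]
        exact Sandwiched.interior_step ha hlam hring (ih (by omega) j hj (by omega))
          (ih (by omega) (j - 1) (by omega) (by omega))
      · rw [hright j k hj1 hk (by omega)]
        exact Sandwiched.boundary_step ha hlam hring (ih (by omega) (j - 1) (by omega) (by omega))
    · obtain rfl : j = 1 := by omega
      rw [hleft k hk hkn]
      exact Sandwiched.boundary_step ha hlam hring (ih (by omega) 1 le_rfl (by omega))

theorem line_age_sandwiched_by_ring_age_general
    (n0 : ℕ) (lamS lam n : ℝ)
    (hlamS : 0 < lamS) (hlam : 0 < lam) (hn : 0 < n)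
    (Δ : ℕ → ℕ → ℝ)
    (hfull : Δ 1 n0 = lamS * n / ((n0 : ℝ) * lam))
    (hmid : ∀ j k : ℕ, 1 < j → 1 ≤ k → j + k ≤ n0 →
      Δ j k = (lamS + (lam / 2) * Δ j (k + 1) + (lam / 2) * Δ (j - 1) (k + 1))
        / ((k : ℝ) * lam / n + lam))
    (hleft : ∀ k : ℕ, 1 ≤ k → k < n0 →
      Δ 1 k = (lamS + (lam / 2) * Δ 1 (k + 1)) / ((k : ℝ) * lam / n + lam / 2))
    (hright : ∀ j k : ℕ, 1 < j → 1 ≤ k → j + k = n0 + 1 →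
      Δ j k = (lamS + (lam / 2) * Δ (j - 1) (k + 1)) / ((k : ℝ) * lam / n + lam / 2))
    (Δr : ℕ → ℝ)
    (hrfull : Δr n0 = lamS * n / ((n0 : ℝ) * lam))
    (hrrec : ∀ k : ℕ, 1 ≤ k → k + 1 ≤ n0 →
      Δr k = (lamS + lam * Δr (k + 1)) / ((k : ℝ) * lam / n + lam))
    (hrmono : ∀ k : ℕ, 1 ≤ k → k + 1 ≤ n0 → Δr (k + 1) ≤ Δr k)
    (i : ℕ) (hi : 1 ≤ i) (hin0 : i ≤ n0) :
    Δr 1 ≤ Δ i 1 ∧ Δ i 1 ≤ 2 * Δr 1 := by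
  have hbase : Sandwiched (Δr n0) (Δ 1 n0) := by
    rw [hfull, hrfull]
    exact Sandwiched.of_eq (by positivity)
  exact sandwiched_ring_age_line_age hlam hn.le hbase hmid hleft hright hrrec hrmono
    (by omega) le_rfl i hi (by omega)

/-- Let `Δ` be a line age function on `n0` nodes and `Δr` a ring age function on `n0` nodes,
both with the same parameters `lamS, lam, n`. Then for every node `i` with `1 ≤ i ≤ n0`, the
version ages are sandwiched as `Δr 1 ≤ Δ i 1 ≤ 2 * Δr 1`. -/
theorem line_age_sandwiched_by_ring_age
    (n0 : ℕ) (lamS lam n : ℝ)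
    (hn0 : 0 < n0) (hlamS : 0 < lamS) (hlam : 0 < lam) (hn : 0 < n)
    (Δ : ℕ → ℕ → ℝ)
    (hfull : Δ 1 n0 = lamS * n / ((n0 : ℝ) * lam))
    (hmid : ∀ j k : ℕ, 1 < j → 1 ≤ k → j + k ≤ n0 →
      Δ j k = (lamS + (lam / 2) * Δ j (k + 1) + (lam / 2) * Δ (j - 1) (k + 1))
        / ((k : ℝ) * lam / n + lam))
    (hleft : ∀ k : ℕ, 1 ≤ k → k < n0 →
      Δ 1 k = (lamS + (lam / 2) * Δ 1 (k + 1)) / ((k : ℝ) * lam / n + lam / 2))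
    (hright : ∀ j k : ℕ, 1 < j → 1 ≤ k → j + k = n0 + 1 →
      Δ j k = (lamS + (lam / 2) * Δ (j - 1) (k + 1)) / ((k : ℝ) * lam / n + lam / 2))
    (hmono : ∀ j k j' k' : ℕ, 1 ≤ j' → 1 ≤ k → j' ≤ j → j + k ≤ j' + k' → j' + k' ≤ n0 + 1 →
      Δ j' k' ≤ Δ j k)
    (Δr : ℕ → ℝ)
    (hrfull : Δr n0 = lamS * n / ((n0 : ℝ) * lam))
    (hrrec : ∀ k : ℕ, 1 ≤ k → k + 1 ≤ n0 →
      Δr k = (lamS + lam * Δr (k + 1)) / ((k : ℝ) * lam / n + lam))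
    (hrmono : ∀ k : ℕ, 1 ≤ k → k + 1 ≤ n0 → Δr (k + 1) ≤ Δr k)
    (i : ℕ) (hi : 1 ≤ i) (hin0 : i ≤ n0) :
    Δr 1 ≤ Δ i 1 ∧ Δ i 1 ≤ 2 * Δr 1 :=
  line_age_sandwiched_by_ring_age_general n0 lamS lam n hlamS hlam hn Δ hfull hmid hleft hright Δr
    hrfull hrrec hrmono i hi hin0
end

section
/- Define f(n0) = n0·F(n, n0). Then for every positive integer n0, f(n0) − f(n0+1) = −(λs/λ)·Σ_{j=1}^{n0} Π_{k=1}^{j} 1/(k/n + 1); consequently the successive difference f(n0) − f(n0+1) is strictly decreasing as n0 increases, i.e., f(n0+1) − f(n0+2) < f(n0) − f(n0+1) for every positive integer n0. -/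
open Finset

/-- Closed-form stationary version age of a single node in a ring of `n0` gossiping nodes
(source rate `lamS`, per-node update rate `lam/n`, per-link rate `lam/2`). -/
noncomputable def ringNodeAge (lamS lam n : ℝ) (n0 : ℕ) : ℝ :=
  (lamS / lam) *
    ((∑ j ∈ Finset.Icc 1 (n0 - 1), ∏ k ∈ Finset.Icc 1 j, 1 / ((k : ℝ) / n + 1))
      + (n / (n0 : ℝ)) * ∏ k ∈ Finset.Icc 1 (n0 - 1), 1 / ((k : ℝ) / n + 1))

/-- Sum of version ages over the `n0` nodes of a ring. -/
noncomputable def ringSumAge (lamS lam n : ℝ) (n0 : ℕ) : ℝ :=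
  (n0 : ℝ) * ringNodeAge lamS lam n n0

/-!
Write `P j = ∏_{k=1}^j 1/(k/n+1)` and `S m = ∑_{j=1}^m P j`. For a ring of `m + 1` nodes the
factor `n0` cancels the `1/n0`, so `f(m+1) = (λs/λ)·((m+1)·S m + n·P m)`. The recursion of the
product reads `n·P m = (m+1+n)·P (m+1)`, and substituting it makes the difference
`f(m+1) - f(m+2)` collapse to `-(λs/λ)·S (m+1)`. Since every `P j` is positive, `S` is strictly
increasing, hence the difference is strictly decreasing.
-/

noncomputable def ringWeight (n : ℝ) (j : ℕ) : ℝ :=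
  ∏ k ∈ Icc 1 j, 1 / ((k : ℝ) / n + 1)

lemma ringWeight_pos {n : ℝ} (hn : 0 ≤ n) (j : ℕ) : 0 < ringWeight n j :=
  prod_pos fun k _ => by positivity

lemma ringWeight_succ (n : ℝ) (j : ℕ) :
    ringWeight n (j + 1) = ringWeight n j * (1 / (((j + 1 : ℕ) : ℝ) / n + 1)) :=
  prod_Icc_succ_top (by omega) _

lemma add_mul_ringWeight_succ {n : ℝ} (hn : 0 < n) (j : ℕ) :
    ((j : ℝ) + 1 + n) * ringWeight n (j + 1) = n * ringWeight n j := by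
  rw [ringWeight_succ]
  push_cast
  field_simp

lemma ringSumAge_succ (lamS lam n : ℝ) (m : ℕ) :
    ringSumAge lamS lam n (m + 1)
      = lamS / lam * (((m : ℝ) + 1) * ∑ j ∈ Icc 1 m, ringWeight n j + n * ringWeight n m) := by
  rw [ringSumAge, ringNodeAge, Nat.add_sub_cancel]
  unfold ringWeight
  push_cast
  field_simp

lemma ringSumAge_sub_ringSumAge_succ {n : ℝ} (hn : 0 < n) (lamS lam : ℝ) (m : ℕ) :
    ringSumAge lamS lam n (m + 1) - ringSumAge lamS lam n (m + 2)
      = -(lamS / lam) * ∑ j ∈ Icc 1 (m + 1), ringWeight n j := by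
  have hweight := add_mul_ringWeight_succ hn m
  rw [ringSumAge_succ, ringSumAge_succ, ← hweight, sum_Icc_succ_top (by omega)]
  push_cast
  ring

/-- With `f(n0) = n0·F(n,n0)` the sum of version ages of a ring of `n0` nodes, one has
`f(n0) - f(n0+1) = -(lamS/lam)·Σ_{j=1}^{n0} Π_{k=1}^{j} 1/(k/n+1)`; consequently the
successive difference `f(n0) - f(n0+1)` is strictly decreasing in `n0`. -/
theorem ringSumAge_successive_difference
    (lamS lam n : ℝ) (hlamS : 0 < lamS) (hlam : 0 < lam) (hn : 0 < n) :
    (∀ n0 : ℕ, 0 < n0 →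
      ringSumAge lamS lam n n0 - ringSumAge lamS lam n (n0 + 1)
        = -(lamS / lam) * ∑ j ∈ Finset.Icc 1 n0, ∏ k ∈ Finset.Icc 1 j, 1 / ((k : ℝ) / n + 1)) ∧
    (∀ n0 : ℕ, 0 < n0 →
      ringSumAge lamS lam n (n0 + 1) - ringSumAge lamS lam n (n0 + 2)
        < ringSumAge lamS lam n n0 - ringSumAge lamS lam n (n0 + 1)) := by
  have hdiff : ∀ n0 : ℕ, 0 < n0 →
      ringSumAge lamS lam n n0 - ringSumAge lamS lam n (n0 + 1)
        = -(lamS / lam) * ∑ j ∈ Icc 1 n0, ringWeight n j := by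
    intro n0 hn0
    obtain ⟨m, rfl⟩ := Nat.exists_eq_add_one_of_ne_zero hn0.ne'
    exact ringSumAge_sub_ringSumAge_succ hn lamS lam m
  refine ⟨hdiff, fun n0 hn0 => ?_⟩
  rw [hdiff n0 hn0, hdiff (n0 + 1) n0.succ_pos, sum_Icc_succ_top (by omega), mul_add]
  have hlast := mul_pos (div_pos hlamS hlam) (ringWeight_pos hn.le (n0 + 1))
  linarith
end

section
/- For all positive integers n and n0 with n0 ≤ n, Σ_{j=1}^{n0} Π_{k=1}^{j} 1/(1 + k/n) ≤ √(π·n). In particular Σ_{j=1}^{n0} Π_{k=1}^{j} 1/(1 + k/n) = O(√n). -/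
/-!
Since `1 / (1 + x) ≤ exp (-x / 2)` on `[0, 1]`, the `j`-th product is at most
`exp (-(1 + 2 + ⋯ + j) / (2n)) ≤ exp (-j² / (4n))` as long as `j ≤ n`. The sum of these Gaussian
terms over `j ≥ 1` is bounded by the half-line integral `∫₀^∞ exp (-x² / (4n)) dx = √(π n)`,
because the integrand is decreasing.
-/

open Finset Real MeasureTheory

theorem sum_Icc_one_id_mul_two {R : Type*} [CommSemiring R] (j : ℕ) :
    (∑ k ∈ Icc 1 j, (k : R)) * 2 = j * (j + 1) := by
  induction j with
  | zero => simp
  | succ m ih =>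
    rw [sum_Icc_succ_top (by omega), add_mul, ih]
    push_cast
    ring

theorem one_div_one_add_le_exp_neg_half {x : ℝ} (hx₀ : 0 ≤ x) (hx₁ : x ≤ 1) :
    1 / (1 + x) ≤ exp (-(x / 2)) := calc
  1 / (1 + x) ≤ 1 - x / 2 := by
    rw [div_le_iff₀ (by linarith)]
    nlinarith
  _ ≤ exp (-(x / 2)) := one_sub_le_exp_neg _

theorem prod_Icc_one_div_one_add_div_le_exp {n j : ℕ} (hn : 0 < n) (hjn : j ≤ n) :
    ∏ k ∈ Icc 1 j, 1 / (1 + (k : ℝ) / n) ≤ exp (-(4 * n : ℝ)⁻¹ * j ^ 2) := by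
  have hn' : (0 : ℝ) < n := by exact_mod_cast hn
  calc ∏ k ∈ Icc 1 j, 1 / (1 + (k : ℝ) / n)
      ≤ ∏ k ∈ Icc 1 j, exp (-((k : ℝ) / n / 2)) := by
        refine prod_le_prod (fun k _ => by positivity) fun k hk => ?_
        refine one_div_one_add_le_exp_neg_half (by positivity) ?_
        rw [div_le_one hn']
        exact_mod_cast (mem_Icc.1 hk).2.trans hjn
    _ = exp (-((∑ k ∈ Icc 1 j, (k : ℝ)) * 2 / (4 * n))) := by
        rw [← exp_sum, sum_neg_distrib, sum_mul, sum_div]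
        congr 2
        refine sum_congr rfl fun k _ => ?_
        field_simp
        ring
    _ ≤ exp (-(4 * n : ℝ)⁻¹ * j ^ 2) := by
        rw [sum_Icc_one_id_mul_two]
        gcongr
        rw [neg_mul, neg_le_neg_iff, inv_mul_eq_div]
        gcongr
        nlinarith

theorem AntitoneOn.sum_Icc_one_le_integral_Ioi {f : ℝ → ℝ} (hf : AntitoneOn f (Set.Ici 0))
    (hf₀ : ∀ x ∈ Set.Ioi 0, 0 ≤ f x) (hfi : IntegrableOn f (Set.Ioi 0)) (m : ℕ) :
    ∑ j ∈ Icc 1 m, f j ≤ ∫ x in Set.Ioi 0, f x := calc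
  ∑ j ∈ Icc 1 m, f j = ∑ i ∈ Ico 0 m, f ↑(i + 1) := by
    rw [← Ico_add_one_right_eq_Icc]
    exact (sum_Ico_add' (fun j : ℕ => f j) 0 m 1).symm
  _ ≤ ∫ x in (0 : ℕ)..m, f x :=
    (hf.mono (by simpa using Set.Icc_subset_Ici_self)).sum_le_integral_Ico (Nat.zero_le m)
  _ ≤ ∫ x in Set.Ioi 0, f x := by
    rw [Nat.cast_zero, intervalIntegral.integral_of_le (Nat.cast_nonneg m)]
    exact setIntegral_mono_set hfi ((ae_restrict_iff' measurableSet_Ioi).2 (.of_forall hf₀))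
      Set.Ioc_subset_Ioi_self.eventuallyLE

theorem sum_Icc_one_exp_neg_mul_sq_le {b : ℝ} (hb : 0 < b) (m : ℕ) :
    ∑ j ∈ Icc 1 m, exp (-b * j ^ 2) ≤ √(π / b) / 2 := by
  rw [← integral_gaussian_Ioi]
  refine AntitoneOn.sum_Icc_one_le_integral_Ioi (fun x hx y hy hxy => ?_)
    (fun x _ => (exp_pos _).le) (integrable_exp_neg_mul_sq hb).integrableOn m
  rw [exp_le_exp, neg_mul, neg_mul, neg_le_neg_iff]
  gcongr

theorem sum_product_le_sqrt_pi_n_general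
    (n n0 : ℕ) (hn : 0 < n) (hn0n : n0 ≤ n) :
    ∑ j ∈ Finset.Icc 1 n0, ∏ k ∈ Finset.Icc 1 j, 1 / (1 + (k : ℝ) / (n : ℝ))
      ≤ Real.sqrt (Real.pi * n) := calc
  _ ≤ ∑ j ∈ Icc 1 n0, exp (-(4 * n : ℝ)⁻¹ * j ^ 2) :=
    sum_le_sum fun j hj => prod_Icc_one_div_one_add_div_le_exp hn ((mem_Icc.1 hj).2.trans hn0n)
  _ ≤ √(π / (4 * n : ℝ)⁻¹) / 2 := sum_Icc_one_exp_neg_mul_sq_le (by positivity) n0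
  _ = √(π * n) := by
    rw [div_inv_eq_mul, show π * (4 * n) = 2 ^ 2 * (π * n) by ring,
      sqrt_mul (by positivity), sqrt_sq zero_le_two]
    ring

/-- For all positive integers `n0 ≤ n`,
`Σ_{j=1}^{n0} Π_{k=1}^{j} 1/(1 + k/n) ≤ √(π·n)`; in particular this sum is `O(√n)`. -/
theorem sum_product_le_sqrt_pi_n
    (n n0 : ℕ) (hn : 0 < n) (hn0 : 0 < n0) (hn0n : n0 ≤ n) :
    ∑ j ∈ Finset.Icc 1 n0, ∏ k ∈ Finset.Icc 1 j, 1 / (1 + (k : ℝ) / (n : ℝ))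
      ≤ Real.sqrt (Real.pi * n) :=
  sum_product_le_sqrt_pi_n_general n n0 hn hn0n
end

section
/- There exists a real constant c > 0 such that for all integers n ≥ 4 and all positive integers n0 with n0 ≥ √n, one has Σ_{j=1}^{n0} Π_{k=1}^{j} 1/(1 + k/n) ≥ c·√n. In particular, if n0 = ω(√n), then Σ_{j=1}^{n0} Π_{k=1}^{j} 1/(1 + k/n) = Ω(√n). -/
open Finset Real

/-! For `j ≤ √n` we have `∏_{k ≤ j} (1 + k/n) ≤ exp (∑_{k ≤ j} k/n) ≤ exp (j²/n) ≤ e`, so each of the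
first `⌊√n⌋ ≤ n0` terms of the sum is at least `1/e`, and `⌊√n⌋ ≥ √n / 2`. -/

lemma sum_Icc_cast_div_le_sq_div (n j : ℕ) : ∑ k ∈ Icc 1 j, (k : ℝ) / n ≤ (j : ℝ) ^ 2 / n := by
  calc ∑ k ∈ Icc 1 j, (k : ℝ) / n ≤ ∑ _k ∈ Icc 1 j, (j : ℝ) / n :=
        sum_le_sum fun k hk => by gcongr; exact_mod_cast (mem_Icc.1 hk).2
    _ = (j : ℝ) ^ 2 / n := by rw [sum_const, Nat.card_Icc, nsmul_eq_mul]; push_cast; ring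

lemma exp_neg_sq_div_le_prod_inv_one_add (n j : ℕ) :
    exp (-((j : ℝ) ^ 2 / n)) ≤ ∏ k ∈ Icc 1 j, 1 / (1 + (k : ℝ) / n) := by
  have hprod : ∏ k ∈ Icc 1 j, (1 + (k : ℝ) / n) ≤ exp ((j : ℝ) ^ 2 / n) :=
    (prod_one_add_le_exp_sum _ fun k => by positivity).trans
      (exp_le_exp.2 (sum_Icc_cast_div_le_sq_div n j))
  rw [exp_neg]
  simp only [one_div, prod_inv_distrib]
  exact inv_anti₀ (prod_pos fun k _ => by positivity) hprod

lemma Real.sqrt_le_two_mul_nat_sqrt {a : ℕ} (ha : 0 < a) : √(a : ℝ) ≤ 2 * Nat.sqrt a := by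
  have : (1 : ℝ) ≤ Nat.sqrt a := by exact_mod_cast Nat.sqrt_pos.2 ha
  linarith [real_sqrt_lt_nat_sqrt_succ (a := a)]

/-- There is a constant `c > 0` such that for all integers `n ≥ 4` and all positive integers
`n0 ≥ √n`, `Σ_{j=1}^{n0} Π_{k=1}^{j} 1/(1 + k/n) ≥ c·√n`; in particular, if `n0 = ω(√n)`,
this sum is `Ω(√n)`. -/
theorem sum_product_ge_const_sqrt_n :
    ∃ c : ℝ, 0 < c ∧ ∀ n n0 : ℕ, 4 ≤ n → 0 < n0 → Real.sqrt n ≤ (n0 : ℝ) →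
      c * Real.sqrt n
        ≤ ∑ j ∈ Finset.Icc 1 n0, ∏ k ∈ Finset.Icc 1 j, 1 / (1 + (k : ℝ) / (n : ℝ)) := by
  refine ⟨1 / (2 * exp 1), by positivity, fun n n0 hn _ hn0 => ?_⟩
  set m := Nat.sqrt n
  have hn_pos : (0 : ℝ) < n := by positivity
  have hm : m ≤ n0 := by exact_mod_cast nat_sqrt_le_real_sqrt.trans hn0
  have hterm : ∀ j ∈ Icc 1 m, exp (-1) ≤ ∏ k ∈ Icc 1 j, 1 / (1 + (k : ℝ) / n) := by
    intro j hj
    have hjn : (j : ℝ) ^ 2 ≤ n := by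
      exact_mod_cast (Nat.pow_le_pow_left (mem_Icc.1 hj).2 2).trans (Nat.sqrt_le' n)
    refine le_trans (exp_le_exp.2 ?_) (exp_neg_sq_div_le_prod_inv_one_add n j)
    linarith [(div_le_one hn_pos).2 hjn]
  calc 1 / (2 * exp 1) * √(n : ℝ) ≤ m * exp (-1) := by
        rw [exp_neg, div_mul_eq_mul_div, one_mul, div_le_iff₀ (by positivity)]
        calc √(n : ℝ) ≤ 2 * m := sqrt_le_two_mul_nat_sqrt (by omega)
          _ = m * (exp 1)⁻¹ * (2 * exp 1) := by field_simp
    _ = ∑ _j ∈ Icc 1 m, exp (-1) := by simp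
    _ ≤ ∑ j ∈ Icc 1 m, ∏ k ∈ Icc 1 j, 1 / (1 + (k : ℝ) / n) := sum_le_sum hterm
    _ ≤ ∑ j ∈ Icc 1 n0, ∏ k ∈ Icc 1 j, 1 / (1 + (k : ℝ) / n) :=
        sum_le_sum_of_subset_of_nonneg (Icc_subset_Icc_right hm) fun _ _ _ => by positivity
end
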